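/- Let Q be a set of questions, p⁺, p⁻ : Q → ℝ a probe, and h : Q → {0,1} a binary feature. Define the transformed probe p'⁺(q) = p⁺(q) ⊕ h(q) and p'⁻(q) = p⁻(q) ⊕ h(q), where a ⊕ b = (1 − a)·b + (1 − b)·a. Suppose that the averaged prediction satisfies p̃(q) ≠ 1/2 for every q ∈ Q. Then the induced classifier of the transformed probe satisfies f_{p'}(q) = f_p(q) ⊕ h(q) for every q ∈ Q (where on binary values ⊕ coincides with exclusive-or). -/

import Mathlib

/-! For a binary `h`, `⊕ h` is the identity when `h = 0` and the reflection `a ↦ 1 - a` when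
`h = 1`. The reflection sends the averaged prediction `p̃` to `1 - p̃`, and thresholding at `1/2`
turns `1 - p̃` into `1 - f_p`, provided `p̃` is not the threshold itself. -/

/-- The continuous exclusive-or of two reals. -/
def cxor (a b : ℝ) : ℝ := (1 - a) * b + (1 - b) * a

@[simp]
theorem cxor_zero_right (a : ℝ) : cxor a 0 = a := by
  unfold cxor; ring

@[simp]
theorem cxor_one_right (a : ℝ) : cxor a 1 = 1 - a := by
  unfold cxor; ring

theorem ite_one_sub_gt_half {K : Type*} [Field K] [LinearOrder K] [IsStrictOrderedRing K]
    {x : K} (hx : x ≠ 1 / 2) :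
    (if 1 - x > 1 / 2 then (1 : K) else 0) = 1 - if x > 1 / 2 then 1 else 0 := by
  rcases hx.lt_or_gt with hlt | hgt
  · rw [if_pos (by linarith), if_neg (by linarith), sub_zero]
  · rw [if_neg (by linarith), if_pos (by linarith), sub_self]

/-- If the averaged prediction is never exactly 1/2, then the induced
classifier of the transformed probe `p' = p ⊕ h` is `f_p ⊕ h`. -/
theorem induced_classifier_under_cxor {Q : Type*}
    (pp pm : Q → ℝ) (h : Q → ℝ) (hbin : ∀ q, h q = 0 ∨ h q = 1)
    (hne : ∀ q : Q, (pp q + (1 - pm q)) / 2 ≠ 1 / 2) :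
    ∀ q : Q,
      (if (cxor (pp q) (h q) + (1 - cxor (pm q) (h q))) / 2 > 1 / 2 then (1:ℝ) else 0)
        = cxor (if (pp q + (1 - pm q)) / 2 > 1 / 2 then (1:ℝ) else 0) (h q) := by
  intro q
  rcases hbin q with h0 | h1
  · simp only [h0, cxor_zero_right]
  · have reflect : (1 - pp q + (1 - (1 - pm q))) / 2 = 1 - (pp q + (1 - pm q)) / 2 := by ring
    simp only [h1, cxor_one_right]
    rw [reflect]
    exact ite_one_sub_gt_half (hne q)
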